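/- arXiv:1610.06341 — 2 statements merged into one kernel-verified Lean document; each statement's English description precedes it below -/
import Mathlib

section
/- Let (X,d) be a metric space and {(x_i,r_i)}_i a directed subset of the poset of formal balls (BX, ⊑), where (x,r) ⊑ (y,s) iff r ≥ s + d(x,y). If x is a Yoneda limit of the underlying forward Cauchy net {x_i} and r = inf_i r_i, then (x,r) is a join of {(x_i,r_i)}_i in (BX, ⊑). -/
open ENNReal

universe u

structure GMetric (X : Type u) where
  d : X → X → ℝ≥0∞
  refl : ∀ x, d x x = 0
  triangle : ∀ x y z, d x z ≤ d x y + d y z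

variable {X : Type u}

/-- Weight of a generalized metric space. -/
def IsWeight (m : GMetric X) (φ : X → ℝ≥0∞) : Prop := ∀ x y, φ x ≤ φ y + m.d x y

/-- Coweight of a generalized metric space. -/
def IsCoweight (m : GMetric X) (ψ : X → ℝ≥0∞) : Prop := ∀ x y, ψ y ≤ ψ x + m.d x y

/-- The metric on weights: d̄(φ,ψ) = sup_x (ψ x ⊖ φ x). -/
noncomputable def dbar (φ ψ : X → ℝ≥0∞) : ℝ≥0∞ := ⨆ x, ψ x - φ x

/-- A directed index: nonempty, preordered and directed. -/
def DirIdx {ι : Type*} (le : ι → ι → Prop) : Prop :=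
  Nonempty ι ∧ Reflexive le ∧ Transitive le ∧ ∀ i j, ∃ k, le i k ∧ le j k

/-- Forward Cauchy net. -/
def ForwardCauchy {ι : Type*} (m : GMetric X) (le : ι → ι → Prop) (x : ι → X) : Prop :=
  DirIdx le ∧ (⨅ i, ⨆ j, ⨆ (_ : le i j), ⨆ k, ⨆ (_ : le j k), m.d (x j) (x k)) = 0

/-- Yoneda limit of a net. -/
def YonedaLimit {ι : Type*} (m : GMetric X) (le : ι → ι → Prop) (x : ι → X) (a : X) : Prop :=
  ∀ y, m.d a y = ⨅ i, ⨆ j, ⨆ (_ : le i j), m.d (x j) y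

/-- Scott weight. -/
def ScottWeight (m : GMetric X) (φ : X → ℝ≥0∞) : Prop :=
  IsWeight m φ ∧ ∀ (ι : Type u) (le : ι → ι → Prop) (x : ι → X) (a : X),
    ForwardCauchy m le x → YonedaLimit m le x a →
    φ a ≤ ⨅ i, ⨆ j, ⨆ (_ : le i j), φ (x j)

/-- The Scott approach distance. -/
noncomputable def scottDist (m : GMetric X) (x : X) (A : Set X) : ℝ≥0∞ :=
  ⨆ (φ : X → ℝ≥0∞) (_ : ScottWeight m φ ∧ ∀ a ∈ A, φ a = 0), φ x

/-- Tensor product of a weight and a coweight. -/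
noncomputable def tensor (φ ψ : X → ℝ≥0∞) : ℝ≥0∞ := ⨅ x, φ x + ψ x

/-- Flat weight. -/
def FlatWeight (m : GMetric X) (φ : X → ℝ≥0∞) : Prop :=
  IsWeight m φ ∧ (⨅ x, φ x) = 0 ∧
  ∀ ψ₁ ψ₂, IsCoweight m ψ₁ → IsCoweight m ψ₂ →
    tensor φ (fun x => max (ψ₁ x) (ψ₂ x)) = max (tensor φ ψ₁) (tensor φ ψ₂)

/-- Colimit of a weight. -/
def IsColimit (m : GMetric X) (φ : X → ℝ≥0∞) (a : X) : Prop :=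
  ∀ y, dbar φ (fun z => m.d z y) = m.d a y

/-- Compact element. -/
def IsCompactElem (m : GMetric X) (a : X) : Prop :=
  ∀ (ι : Type u) (le : ι → ι → Prop) (x : ι → X) (b : X),
    ForwardCauchy m le x → YonedaLimit m le x b →
    m.d a b = ⨅ i, ⨆ j, ⨆ (_ : le i j), m.d a (x j)

/-- Approach space axioms. -/
def A1 (δ : X → Set X → ℝ≥0∞) : Prop := ∀ x, δ x {x} = 0
def A2 (δ : X → Set X → ℝ≥0∞) : Prop := ∀ x, δ x (∅ : Set X) = ∞
def A3 (δ : X → Set X → ℝ≥0∞) : Prop := ∀ x A B, δ x (A ∪ B) = min (δ x A) (δ x B)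
def A4 (δ : X → Set X → ℝ≥0∞) : Prop := ∀ x A B, δ x A ≤ δ x B + ⨆ b ∈ B, δ b A

/-- Regular function of an approach space. -/
def IsRegularFn (δ : X → Set X → ℝ≥0∞) (φ : X → ℝ≥0∞) : Prop :=
  ∀ x A, φ x - (⨆ a ∈ A, φ a) ≤ δ x A

/-- The Lawvere metric d_L(a,b) = b ⊖ a on [0,∞]. -/
noncomputable def dL : GMetric ℝ≥0∞ where
  d a b := b - a
  refl x := tsub_self x
  triangle x y z := by
    calc z - x ≤ z - y + (y - x) := tsub_le_tsub_add_tsub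
    _ = (y - x) + (z - y) := add_comm _ _

/-- The opposite Lawvere metric d_R(a,b) = a ⊖ b on [0,∞]. -/
noncomputable def dR : GMetric ℝ≥0∞ where
  d a b := a - b
  refl x := tsub_self x
  triangle _ _ _ := tsub_le_tsub_add_tsub

/-- Order on formal balls. -/
def ballLE (m : GMetric X) (p q : X × ℝ≥0∞) : Prop := q.2 + m.d p.1 q.1 ≤ p.2

/-!
Since `d(a, a) = 0`, the net is eventually `ε`-close to its Yoneda limit `a`; going up to such an
index above a given ball and using the triangle inequality gives `r + d(p.1, a) ≤ p.2 + ε`, so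
`(a, r)` is an upper bound. Conversely `d(a, y)` is bounded by any eventual bound of `d(x_j, y)`,
and an upper bound `q` of the balls gives the eventual bound `q.2 + d(x_j, q.1) ≤ r_j ≤ r_i`
for `j ⊒ i`.
-/

namespace YonedaLimit

variable {ι : Type*} {m : GMetric X} {le : ι → ι → Prop} {x : ι → X} {a : X}

theorem exists_forall_dist_lt (hY : YonedaLimit m le x a) {ε : ℝ≥0∞} (hε : 0 < ε) :
    ∃ i, ∀ j, le i j → m.d (x j) a < ε := by
  have hlim : (⨅ i, ⨆ j, ⨆ (_ : le i j), m.d (x j) a) < ε := by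
    rwa [← hY a, m.refl a]
  obtain ⟨i, hi⟩ := iInf_lt_iff.mp hlim
  exact ⟨i, fun j hj => (le_iSup₂ (f := fun j (_ : le i j) => m.d (x j) a) j hj).trans_lt hi⟩

theorem add_dist_le (hY : YonedaLimit m le x a) {i : ι} (hi : le i i) {y : X} {c b : ℝ≥0∞}
    (h : ∀ j, le i j → c + m.d (x j) y ≤ b) : c + m.d a y ≤ b :=
  calc c + m.d a y ≤ c + ⨆ j, ⨆ (_ : le i j), m.d (x j) y := by
        gcongr
        rw [hY y]
        exact iInf_le _ i
    _ = ⨆ j, ⨆ (_ : le i j), c + m.d (x j) y := ENNReal.add_biSup' ⟨i, hi⟩ _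
    _ ≤ b := iSup₂_le h

end YonedaLimit

section FormalBalls

variable {m : GMetric X}

theorem ballLE_refl (p : X × ℝ≥0∞) : ballLE m p p := by
  simp [ballLE, m.refl]

theorem ballLE.snd_le {p q : X × ℝ≥0∞} (h : ballLE m p q) : q.2 ≤ p.2 :=
  le_self_add.trans h

variable {D : Set (X × ℝ≥0∞)} {a : X}

theorem ballLE_of_yonedaLimit (hdir : ∀ p ∈ D, ∀ q ∈ D, ∃ z ∈ D, ballLE m p z ∧ ballLE m q z)
    (hY : YonedaLimit m (fun i j : D => ballLE m i.1 j.1) (fun i : D => i.1.1) a)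
    {r : ℝ≥0∞} (hr : ∀ k ∈ D, r ≤ k.2) {p : X × ℝ≥0∞} (hp : p ∈ D) : ballLE m p (a, r) := by
  refine ENNReal.le_of_forall_pos_le_add fun ε hε _ => ?_
  obtain ⟨i, hi⟩ := hY.exists_forall_dist_lt (ENNReal.coe_pos.mpr hε)
  obtain ⟨k, hk, hik, hpk⟩ := hdir i.1 i.2 p hp
  calc r + m.d p.1 a ≤ r + (m.d p.1 k.1 + m.d k.1 a) := by gcongr; exact m.triangle _ _ _
    _ = (r + m.d p.1 k.1) + m.d k.1 a := (add_assoc _ _ _).symm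
    _ ≤ (k.2 + m.d p.1 k.1) + ε := add_le_add (by gcongr; exact hr k hk) (hi ⟨k, hk⟩ hik).le
    _ ≤ p.2 + ε := by gcongr; exact hpk

theorem add_dist_le_of_forall_ballLE
    (hY : YonedaLimit m (fun i j : D => ballLE m i.1 j.1) (fun i : D => i.1.1) a)
    {q : X × ℝ≥0∞} (hq : ∀ p ∈ D, ballLE m p q) {p : X × ℝ≥0∞} (hp : p ∈ D) :
    q.2 + m.d a q.1 ≤ p.2 :=
  hY.add_dist_le (i := (⟨p, hp⟩ : D)) (ballLE_refl p) fun j hj => (hq j.1 j.2).trans hj.snd_le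

end FormalBalls

theorem stmt17_general (m : GMetric X) (D : Set (X × ℝ≥0∞))
    (hdir : ∀ p ∈ D, ∀ q ∈ D, ∃ z ∈ D, ballLE m p z ∧ ballLE m q z)
    (a : X)
    (hY : YonedaLimit m (fun i j : D => ballLE m i.1 j.1)
      (fun i : D => (i : X × ℝ≥0∞).1) a)
    (r : ℝ≥0∞) (hr : r = ⨅ p : D, (p : X × ℝ≥0∞).2) :
    (∀ p ∈ D, ballLE m p (a, r)) ∧
    ∀ q : X × ℝ≥0∞, q.2 < ∞ → (∀ p ∈ D, ballLE m p q) → ballLE m (a, r) q := by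
  subst hr
  refine ⟨fun p hp => ballLE_of_yonedaLimit hdir hY (fun k hk => iInf_le _ (⟨k, hk⟩ : D)) hp,
    fun q _ hq => le_iInf fun p => add_dist_le_of_forall_ballLE hY hq p.2⟩

/-- If x is a Yoneda limit of the underlying net of a directed set of formal balls and
r = inf r_i, then (x,r) is a join of the directed set in (BX, ⊑). -/
theorem stmt17 (m : GMetric X) (D : Set (X × ℝ≥0∞))
    (hne : D.Nonempty) (hfin : ∀ p ∈ D, p.2 < ∞)
    (hdir : ∀ p ∈ D, ∀ q ∈ D, ∃ z ∈ D, ballLE m p z ∧ ballLE m q z)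
    (a : X)
    (hY : YonedaLimit m (fun i j : D => ballLE m i.1 j.1)
      (fun i : D => (i : X × ℝ≥0∞).1) a)
    (r : ℝ≥0∞) (hr : r = ⨅ p : D, (p : X × ℝ≥0∞).2) :
    (∀ p ∈ D, ballLE m p (a, r)) ∧
    ∀ q : X × ℝ≥0∞, q.2 < ∞ → (∀ p ∈ D, ballLE m p q) → ballLE m (a, r) q :=
  stmt17_general m D hdir a hY r hr
end

section
/- An element a of a metric space (X,d) is compact if and only if for every flat weight φ of (X,d) that has a colimit, d(a, colim φ) = φ(a). -/
open ENNReal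

universe u

variable {X : Type u}

/-! Both directions go through the weight `y ↦ inf_i sup_{j ≥ i} d(y, x_j)` of a forward Cauchy
net `x`. This weight is flat, and its colimits are exactly the Yoneda limits of `x`, so for weights
of this form the equation `d(a, colim φ) = φ(a)` is the defining property of a compact element.
Conversely, a flat weight `φ` is the weight of the net of formal balls `(z, r)` with `φ z < r < ∞`,
ordered by `r' + d(z, z') ≤ r`: flatness is what makes this net directed, and `inf φ = 0` is what
makes the radii tend to `0`. -/

section NetLimsup

variable {ι : Type*} {le : ι → ι → Prop}

noncomputable def netLimsup (le : ι → ι → Prop) (f : ι → ℝ≥0∞) : ℝ≥0∞ :=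
  ⨅ i, ⨆ j, ⨆ _ : le i j, f j

theorem le_iSup_tail (f : ι → ℝ≥0∞) {i j : ι} (hij : le i j) : f j ≤ ⨆ j, ⨆ _ : le i j, f j :=
  le_iSup₂ (f := fun j (_ : le i j) => f j) j hij

theorem iSup_tail_anti (htrans : Transitive le) (f : ι → ℝ≥0∞) {i k : ι} (hik : le i k) :
    ⨆ j, ⨆ _ : le k j, f j ≤ ⨆ j, ⨆ _ : le i j, f j :=
  iSup₂_le fun _ hkj => le_iSup_tail f (htrans hik hkj)

theorem netLimsup_le_iSup_tail (f : ι → ℝ≥0∞) (i : ι) :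
    netLimsup le f ≤ ⨆ j, ⨆ _ : le i j, f j :=
  iInf_le _ i

theorem netLimsup_mono {f g : ι → ℝ≥0∞} (hfg : ∀ j, f j ≤ g j) : netLimsup le f ≤ netLimsup le g :=
  iInf_mono fun _ => iSup₂_mono fun j _ => hfg j

theorem netLimsup_add_const_le (f : ι → ℝ≥0∞) (c : ℝ≥0∞) :
    netLimsup le (fun j => f j + c) ≤ netLimsup le f + c := by
  rw [netLimsup, netLimsup, ENNReal.iInf_add]
  exact iInf_mono fun i => iSup₂_le fun j hij => add_le_add_left (le_iSup_tail f hij) c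

theorem netLimsup_add_eq_iInf (hle : DirIdx le) (f g : ι → ℝ≥0∞) :
    netLimsup le f + netLimsup le g =
      ⨅ i, (⨆ j, ⨆ _ : le i j, f j) + ⨆ j, ⨆ _ : le i j, g j :=
  ENNReal.iInf_add_iInf fun i₁ i₂ => by
    obtain ⟨k, h₁, h₂⟩ := hle.2.2.2 i₁ i₂
    exact ⟨k, add_le_add (iSup_tail_anti hle.2.2.1 f h₁) (iSup_tail_anti hle.2.2.1 g h₂)⟩

theorem netLimsup_sup (hle : DirIdx le) (f g : ι → ℝ≥0∞) :
    netLimsup le (fun j => max (f j) (g j)) = max (netLimsup le f) (netLimsup le g) := by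
  have htail : ∀ i, ⨆ j, ⨆ _ : le i j, max (f j) (g j) =
      max (⨆ j, ⨆ _ : le i j, f j) (⨆ j, ⨆ _ : le i j, g j) := fun i => by
    simp only [iSup_sup_eq]
  simp only [netLimsup, htail]
  refine le_antisymm ?_ (le_iInf fun i => max_le_max (iInf_le _ i) (iInf_le _ i))
  simp only [iInf_sup_eq, sup_iInf_eq]
  refine le_iInf₂ fun i₂ i₁ => ?_
  obtain ⟨k, h₁, h₂⟩ := hle.2.2.2 i₁ i₂
  exact iInf_le_of_le k
    (sup_le_sup (iSup_tail_anti hle.2.2.1 f h₁) (iSup_tail_anti hle.2.2.1 g h₂))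

end NetLimsup

section Net

variable {ι : Type*} {m : GMetric X} {le : ι → ι → Prop} {x : ι → X}

noncomputable def netWeight (m : GMetric X) (le : ι → ι → Prop) (x : ι → X) (y : X) : ℝ≥0∞ :=
  netLimsup le fun j => m.d y (x j)

theorem isWeight_netWeight : IsWeight m (netWeight m le x) := fun y z =>
  calc netWeight m le x y ≤ netLimsup le (fun j => m.d z (x j) + m.d y z) :=
        netLimsup_mono fun j => (m.triangle y z (x j)).trans_eq (add_comm _ _)
    _ ≤ netWeight m le x z + m.d y z := netLimsup_add_const_le _ _

theorem ForwardCauchy.exists_netWeight_lt (hx : ForwardCauchy m le x) {ε : ℝ≥0∞} (hε : 0 < ε) :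
    ∃ i, ∀ j, le i j → netWeight m le x (x j) < ε := by
  obtain ⟨i, hi⟩ := iInf_lt_iff.1 (hx.2 ▸ hε)
  exact ⟨i, fun j hij => ((netLimsup_le_iSup_tail _ j).trans
    (le_iSup_tail (fun j => ⨆ k, ⨆ _ : le j k, m.d (x j) (x k)) hij)).trans_lt hi⟩

theorem ForwardCauchy.iInf_netWeight (hx : ForwardCauchy m le x) : ⨅ y, netWeight m le x y = 0 :=
  iInf_eq_bot.2 fun _ hε =>
    let ⟨i, hi⟩ := hx.exists_netWeight_lt hε
    ⟨x i, hi i (hx.1.2.1 i)⟩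

theorem ForwardCauchy.tensor_netWeight (hx : ForwardCauchy m le x) {ψ : X → ℝ≥0∞}
    (hψ : IsCoweight m ψ) : tensor (netWeight m le x) ψ = netLimsup le (ψ ∘ x) := by
  refine le_antisymm (ENNReal.le_of_forall_pos_le_add fun ε hε _ => ?_) (le_iInf fun z => ?_)
  · obtain ⟨i, hi⟩ := hx.exists_netWeight_lt (ENNReal.coe_pos.2 hε)
    rw [add_comm, netLimsup, ENNReal.add_iInf]
    refine le_iInf fun i' => ?_
    obtain ⟨k, hik, hi'k⟩ := hx.1.2.2.2 i i'
    calc tensor (netWeight m le x) ψ ≤ netWeight m le x (x k) + ψ (x k) := iInf_le _ _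
      _ ≤ ε + ⨆ j, ⨆ _ : le i' j, ψ (x j) :=
        add_le_add (hi k hik).le (le_iSup_tail (ψ ∘ x) hi'k)
  · calc netLimsup le (ψ ∘ x) ≤ netLimsup le (fun j => m.d z (x j) + ψ z) :=
          netLimsup_mono fun j => (hψ z (x j)).trans_eq (add_comm _ _)
      _ ≤ netWeight m le x z + ψ z := netLimsup_add_const_le _ _

theorem IsCoweight.max {ψ₁ ψ₂ : X → ℝ≥0∞} (h₁ : IsCoweight m ψ₁) (h₂ : IsCoweight m ψ₂) :
    IsCoweight m fun z => max (ψ₁ z) (ψ₂ z) := fun u v =>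
  max_le ((h₁ u v).trans (by gcongr; exact le_max_left _ _))
    ((h₂ u v).trans (by gcongr; exact le_max_right _ _))

theorem ForwardCauchy.flatWeight_netWeight (hx : ForwardCauchy m le x) :
    FlatWeight m (netWeight m le x) := by
  refine ⟨isWeight_netWeight, hx.iInf_netWeight, fun ψ₁ ψ₂ h₁ h₂ => ?_⟩
  rw [hx.tensor_netWeight h₁, hx.tensor_netWeight h₂, hx.tensor_netWeight (h₁.max h₂)]
  exact netLimsup_sup hx.1 _ _

theorem ForwardCauchy.dbar_netWeight (hx : ForwardCauchy m le x) (y : X) :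
    dbar (netWeight m le x) (fun z => m.d z y) = netLimsup le fun j => m.d (x j) y := by
  refine le_antisymm (iSup_le fun z => ?_) (ENNReal.le_of_forall_pos_le_add fun ε hε _ => ?_)
  · rw [tsub_le_iff_left, netWeight, netLimsup_add_eq_iInf hx.1]
    refine le_iInf fun i => (m.triangle z (x i) y).trans (add_le_add ?_ ?_)
    · exact le_iSup_tail (fun j => m.d z (x j)) (hx.1.2.1 i)
    · exact le_iSup_tail (fun j => m.d (x j) y) (hx.1.2.1 i)
  · obtain ⟨i, hi⟩ := hx.exists_netWeight_lt (ENNReal.coe_pos.2 hε)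
    refine (netLimsup_le_iSup_tail _ i).trans (iSup₂_le fun j hij => ?_)
    calc m.d (x j) y ≤ (m.d (x j) y - netWeight m le x (x j)) + netWeight m le x (x j) :=
          le_tsub_add
      _ ≤ dbar (netWeight m le x) (fun z => m.d z y) + ε :=
          add_le_add (le_iSup (fun z => m.d z y - netWeight m le x z) (x j)) (hi j hij).le

theorem ForwardCauchy.isColimit_netWeight_iff (hx : ForwardCauchy m le x) {b : X} :
    IsColimit m (netWeight m le x) b ↔ YonedaLimit m le x b :=
  forall_congr' fun y => by rw [hx.dbar_netWeight, eq_comm]; rfl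

end Net

section Flat

variable {m : GMetric X} {φ : X → ℝ≥0∞}

theorem isCoweight_dist_add (m : GMetric X) (x : X) (c : ℝ≥0∞) :
    IsCoweight m fun z => m.d x z + c := fun u v =>
  calc m.d x v + c ≤ m.d x u + m.d u v + c := by gcongr; exact m.triangle x u v
    _ = m.d x u + c + m.d u v := add_right_comm _ _ _

theorem tensor_dist_add_le (m : GMetric X) (φ : X → ℝ≥0∞) (x : X) (c : ℝ≥0∞) :
    tensor φ (fun z => m.d x z + c) ≤ φ x + c :=
  (iInf_le (fun z => φ z + (m.d x z + c)) x).trans_eq (by rw [m.refl, zero_add])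

theorem FlatWeight.exists_add_dist_lt (hφ : FlatWeight m φ) {x y : X} {r s : ℝ≥0∞}
    (hr : r ≠ ∞) (hs : s ≠ ∞) (hx : φ x < r) (hy : φ y < s) :
    ∃ z, φ z + m.d x z < r ∧ φ z + m.d y z < s := by
  -- Shifting the two coweights by constants puts both conditions under the common bound `r + s`.
  have hlt : tensor φ (fun z => max (m.d x z + s) (m.d y z + r)) < r + s := by
    rw [hφ.2.2 _ _ (isCoweight_dist_add m x s) (isCoweight_dist_add m y r)]
    refine max_lt ((tensor_dist_add_le m φ x s).trans_lt ?_)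
      ((tensor_dist_add_le m φ y r).trans_lt ?_)
    · exact (ENNReal.add_lt_add_iff_right hs).2 hx
    · rw [add_comm r]
      exact (ENNReal.add_lt_add_iff_right hr).2 hy
  obtain ⟨z, hz⟩ := iInf_lt_iff.1 hlt
  refine ⟨z, (ENNReal.add_lt_add_iff_right hs).1 ?_, (ENNReal.add_lt_add_iff_right hr).1 ?_⟩
  · calc φ z + m.d x z + s ≤ φ z + max (m.d x z + s) (m.d y z + r) := by
          rw [add_assoc]; gcongr; exact le_max_left _ _
      _ < r + s := hz
  · calc φ z + m.d y z + r ≤ φ z + max (m.d x z + s) (m.d y z + r) := by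
          rw [add_assoc]; gcongr; exact le_max_right _ _
      _ < r + s := hz
      _ = s + r := add_comm r s

structure FormalBall (φ : X → ℝ≥0∞) where
  center : X
  radius : ℝ≥0∞
  lt_radius : φ center < radius
  radius_ne_top : radius ≠ ∞

namespace FormalBall

def Le (m : GMetric X) (p q : FormalBall φ) : Prop :=
  ballLE m (p.center, p.radius) (q.center, q.radius)

theorem le_iff {p q : FormalBall φ} :
    Le m p q ↔ q.radius + m.d p.center q.center ≤ p.radius :=
  Iff.rfl

theorem Le.refl (p : FormalBall φ) : Le m p p :=
  show p.radius + m.d p.center p.center ≤ p.radius by rw [m.refl, add_zero]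

theorem Le.trans {p q r : FormalBall φ} (hpq : Le m p q) (hqr : Le m q r) : Le m p r :=
  calc r.radius + m.d p.center r.center
      ≤ r.radius + (m.d p.center q.center + m.d q.center r.center) := by
        gcongr; exact m.triangle _ _ _
    _ = r.radius + m.d q.center r.center + m.d p.center q.center := by ring
    _ ≤ q.radius + m.d p.center q.center := by gcongr; exact hqr
    _ ≤ p.radius := hpq

theorem Le.dist_le_radius {p q : FormalBall φ} (hpq : Le m p q) :
    m.d p.center q.center ≤ p.radius :=
  le_add_self.trans hpq

theorem Le.radius_le {p q : FormalBall φ} (hpq : Le m p q) : q.radius ≤ p.radius :=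
  le_self_add.trans hpq

theorem exists_radius_lt (hφ : ⨅ z, φ z = 0) {ε : ℝ≥0∞} (hε : 0 < ε) :
    ∃ p : FormalBall φ, p.radius < ε := by
  obtain ⟨z, hz⟩ := iInf_lt_iff.1 (hφ ▸ lt_min hε one_pos : (⨅ z, φ z) < min ε 1)
  obtain ⟨r, hzr, hr⟩ := exists_between hz
  exact ⟨⟨z, r, hzr, ((lt_min_iff.1 hr).2.trans one_lt_top).ne⟩, (lt_min_iff.1 hr).1⟩

theorem exists_le_le (hφ : FlatWeight m φ) (p q : FormalBall φ) : ∃ k, Le m p k ∧ Le m q k := by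
  obtain ⟨z, hp, hq⟩ :=
    hφ.exists_add_dist_lt p.radius_ne_top q.radius_ne_top p.lt_radius q.lt_radius
  set t := min (p.radius - m.d p.center z) (q.radius - m.d q.center z)
  refine ⟨⟨z, t, lt_min (lt_tsub_iff_right.2 hp) (lt_tsub_iff_right.2 hq),
    ne_top_of_le_ne_top p.radius_ne_top ((min_le_left _ _).trans tsub_le_self)⟩,
    le_iff.2 ?_, le_iff.2 ?_⟩
  · calc t + m.d p.center z ≤ p.radius - m.d p.center z + m.d p.center z := by
          gcongr; exact min_le_left _ _
      _ = p.radius := tsub_add_cancel_of_le (le_add_self.trans hp.le)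
  · calc t + m.d q.center z ≤ q.radius - m.d q.center z + m.d q.center z := by
          gcongr; exact min_le_right _ _
      _ = q.radius := tsub_add_cancel_of_le (le_add_self.trans hq.le)

theorem dirIdx (hφ : FlatWeight m φ) : DirIdx (Le m (φ := φ)) :=
  ⟨(exists_radius_lt hφ.2.1 one_pos).nonempty, Le.refl, fun _ _ _ => Le.trans, exists_le_le hφ⟩

theorem exists_le_radius_lt (hφ : FlatWeight m φ) (p : FormalBall φ) {ε : ℝ≥0∞} (hε : 0 < ε) :
    ∃ q, Le m p q ∧ q.radius < ε := by
  obtain ⟨p₀, hp₀⟩ := exists_radius_lt hφ.2.1 hε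
  obtain ⟨q, hpq, hp₀q⟩ := exists_le_le hφ p p₀
  exact ⟨q, hpq, hp₀q.radius_le.trans_lt hp₀⟩

theorem forwardCauchy_center (hφ : FlatWeight m φ) :
    ForwardCauchy m (Le m) (center : FormalBall φ → X) := by
  refine ⟨dirIdx hφ, iInf_eq_bot.2 fun ε hε => ?_⟩
  obtain ⟨p, hp⟩ := exists_radius_lt hφ.2.1 hε
  refine ⟨p, lt_of_le_of_lt (iSup₂_le fun q hpq => iSup₂_le fun r hqr => ?_) hp⟩
  exact hqr.dist_le_radius.trans hpq.radius_le

theorem netWeight_center (hφ : FlatWeight m φ) :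
    netWeight m (Le m) (center : FormalBall φ → X) = φ := by
  funext y
  refine le_antisymm ?_ (le_iInf fun p => ENNReal.le_of_forall_pos_le_add fun ε hε _ => ?_)
  · rcases eq_or_ne (φ y) ∞ with hy | hy
    · exact hy ▸ le_top
    refine ENNReal.le_of_forall_pos_le_add fun ε hε _ => ?_
    let p : FormalBall φ := ⟨y, φ y + ε, ENNReal.lt_add_right hy (ENNReal.coe_ne_zero.2 hε.ne'),
      ENNReal.add_ne_top.2 ⟨hy, ENNReal.coe_ne_top⟩⟩
    exact (netLimsup_le_iSup_tail _ p).trans (iSup₂_le fun _ hq => hq.dist_le_radius)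
  · obtain ⟨q, hpq, hq⟩ := exists_le_radius_lt hφ p (ENNReal.coe_pos.2 hε)
    calc φ y ≤ φ q.center + m.d y q.center := hφ.1 y q.center
      _ ≤ ε + ⨆ j, ⨆ _ : Le m p j, m.d y j.center :=
          add_le_add (q.lt_radius.trans hq).le (le_iSup_tail (fun j => m.d y j.center) hpq)
      _ = _ := add_comm _ _

end FormalBall

end Flat

/-- An element is compact iff d(a, colim φ) = φ(a) for every flat weight φ with a colimit. -/
theorem stmt18 (m : GMetric X) (a : X) :
    IsCompactElem m a ↔
      ∀ φ : X → ℝ≥0∞, FlatWeight m φ → ∀ c : X, IsColimit m φ c → m.d a c = φ a := by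
  refine ⟨fun hcomp φ hφ c hc => ?_, fun h ι le x b hx hb => ?_⟩
  · have hx := FormalBall.forwardCauchy_center hφ
    have hW := FormalBall.netWeight_center hφ
    have hc' := hx.isColimit_netWeight_iff.1 (hW ▸ hc)
    exact (hcomp _ _ _ c hx hc').trans (congrFun hW a)
  · exact h _ hx.flatWeight_netWeight b (hx.isColimit_netWeight_iff.2 hb)
end
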